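/- Consider D(ε) = Σ_{1≤i<j≤d} (ε_i − ε_j) for ε ranging over E_r^(d), so that the ball-counting polynomial b_r^(d)(X) = Σ_{ε ∈ E_r^(d)} b_ε(X) is a sum of monic polynomials of degrees D(ε). Then: (1) if d is even, the maximum of D over E_r^(d) equals d²r/4 and is attained at exactly one ε (the one with first d/2 entries equal to r and remaining entries 0), so the leading term of b_r^(d)(X) is X^{d²r/4}; (2) if d is odd, the maximum of D over E_r^(d) equals (d²−1)r/4 and is attained at exactly r+1 elements, namely those with ε_i = r for i < (d+1)/2, ε_i = 0 for i > (d+1)/2, and ε_{(d+1)/2} ∈ {0,…,r} arbitrary, so the leading term of b_r^(d)(X) is (r+1)X^{(d²−1)r/4}. -/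
import Mathlib


namespace SphericalSubmoduleCodes

/-- `D(ε) = Σ_{1 ≤ i < j ≤ d} (ε_i − ε_j)` (a natural number for antitone `ε`). -/
def degDN (d : ℕ) (ε : Fin d → ℕ) : ℕ :=
  ∑ i : Fin d, ∑ j : Fin d, if i < j then ε i - ε j else 0

private def stepf (d r m0 v : ℕ) : Fin d → ℕ :=
  fun i => if (i:ℕ) < m0 then r else if (i:ℕ) = m0 then v else 0

private lemma sum_range_lin (c : ℤ) (m : ℕ) :
    ∑ i ∈ Finset.range m, (c - 2*(i:ℤ)) = m * (c - m + 1) := by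
  induction m with
  | zero => simp
  | succ n ih => rw [Finset.sum_range_succ, ih]; push_cast; ring

private lemma degDN_cast (d : ℕ) (ε : Fin d → ℕ)
    (hA : ∀ i j : Fin d, i ≤ j → ε j ≤ ε i) :
    (degDN d ε : ℤ) = ∑ i : Fin d, (((d:ℤ) - 1 - 2*(i:ℕ)) * (ε i : ℤ)) := by
  have h1 : (degDN d ε : ℤ)
      = ∑ i : Fin d, ∑ j : Fin d, ((if i < j then (ε i : ℤ) else 0) - (if i < j then (ε j : ℤ) else 0)) := by
    rw [degDN, Nat.cast_sum]
    refine Finset.sum_congr rfl fun i _ => ?_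
    rw [Nat.cast_sum]
    refine Finset.sum_congr rfl fun j _ => ?_
    by_cases h : i < j
    · simp only [if_pos h]
      have := hA i j h.le
      omega
    · simp only [if_neg h, sub_zero, Nat.cast_zero]
  rw [h1]
  simp_rw [Finset.sum_sub_distrib]
  have hA' : ∀ i : Fin d, (∑ j : Fin d, if i < j then (ε i : ℤ) else 0) = ((d - 1 - (i:ℕ) : ℕ) : ℤ) * ε i := by
    intro i
    have hf : Finset.univ.filter (fun j => i < j) = Finset.Ioi i := by ext j; simp
    rw [Finset.sum_ite, Finset.sum_const_zero, add_zero, hf, Finset.sum_const, nsmul_eq_mul,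
      Fin.card_Ioi]
  have hB : (∑ i : Fin d, ∑ j : Fin d, if i < j then (ε j : ℤ) else 0)
      = ∑ j : Fin d, ((j:ℕ) : ℤ) * ε j := by
    rw [Finset.sum_comm]
    refine Finset.sum_congr rfl fun j _ => ?_
    have hf : Finset.univ.filter (fun i => i < j) = Finset.Iio j := by ext i; simp
    rw [Finset.sum_ite, Finset.sum_const_zero, add_zero, hf, Finset.sum_const, nsmul_eq_mul,
      Fin.card_Iio]
  rw [hB]
  simp_rw [hA']
  rw [← Finset.sum_sub_distrib]
  refine Finset.sum_congr rfl fun i _ => ?_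
  have hi : (i:ℕ) < d := i.isLt
  have hc : ((d - 1 - (i:ℕ) : ℕ) : ℤ) = (d:ℤ) - 1 - (i:ℕ) := by omega
  rw [hc]; ring

private lemma core (d r : ℕ) (hd : 2 ≤ d) (ε : Fin d → ℕ)
    (hA : ∀ i j : Fin d, i ≤ j → ε j ≤ ε i)
    (hle : ∀ i : Fin d, ε i ≤ r) :
    degDN d ε ≤ d/2 * ((d+1)/2) * r ∧
    (degDN d ε = d/2 * ((d+1)/2) * r ↔
      ∀ i : Fin d, (2*(i:ℕ) < d-1 → ε i = r) ∧ (d-1 < 2*(i:ℕ) → ε i = 0)) := by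
  set m := (d+1)/2 with hm
  have hterm : ∀ i : Fin d, (((d:ℤ) - 1 - 2*(i:ℕ)) * (ε i : ℤ))
      ≤ (if (i:ℕ) < m then ((d:ℤ) - 1 - 2*(i:ℕ)) * r else 0) := by
    intro i
    by_cases h : (i:ℕ) < m
    · rw [if_pos h]
      have hc : (0:ℤ) ≤ (d:ℤ) - 1 - 2*(i:ℕ) := by omega
      exact mul_le_mul_of_nonneg_left (by exact_mod_cast hle i) hc
    · rw [if_neg h]
      have hc : ((d:ℤ) - 1 - 2*(i:ℕ)) ≤ 0 := by omega
      exact mul_nonpos_of_nonpos_of_nonneg hc (by positivity)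
  have hsum : (∑ i : Fin d, (if (i:ℕ) < m then ((d:ℤ) - 1 - 2*(i:ℕ)) * r else 0))
      = ((d/2 * ((d+1)/2) * r : ℕ) : ℤ) := by
    rw [Fin.sum_univ_eq_sum_range (fun k => if k < m then ((d:ℤ) - 1 - 2*(k:ℕ)) * r else 0) d]
    rw [Finset.sum_ite, Finset.sum_const_zero, add_zero]
    have hf : (Finset.range d).filter (fun k => k < m) = Finset.range m := by
      ext k; simp only [Finset.mem_filter, Finset.mem_range]; omega
    rw [hf, ← Finset.sum_mul, sum_range_lin]
    have h1 : ((d:ℤ) - 1 - (m:ℕ) + 1) = ((d/2 : ℕ) : ℤ) := by omega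
    rw [h1, Nat.cast_mul, Nat.cast_mul]
    ring
  have hZ := degDN_cast d ε hA
  have hle' := Finset.sum_le_sum (fun i (_ : i ∈ Finset.univ) => hterm i)
  constructor
  · have h2 : (degDN d ε : ℤ) ≤ ((d/2 * ((d+1)/2) * r : ℕ) : ℤ) := by
      rw [hZ, ← hsum]; exact hle'
    exact_mod_cast h2
  · have hcast : (degDN d ε = d/2 * ((d+1)/2) * r)
        ↔ ((degDN d ε : ℤ) = ((d/2 * ((d+1)/2) * r : ℕ) : ℤ)) := by exact_mod_cast Iff.rfl
    rw [hcast, hZ, ← hsum, Finset.sum_eq_sum_iff_of_le (fun i _ => hterm i)]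
    constructor
    · intro h i
      have hi := h i (Finset.mem_univ i)
      constructor
      · intro h2
        rw [if_pos (show (i:ℕ) < m by omega)] at hi
        have hc : ((d:ℤ) - 1 - 2*(i:ℕ)) ≠ 0 := by omega
        have := mul_left_cancel₀ hc hi
        exact_mod_cast this
      · intro h2
        rw [if_neg (show ¬ (i:ℕ) < m by omega)] at hi
        have hc : ((d:ℤ) - 1 - 2*(i:ℕ)) ≠ 0 := by omega
        rcases mul_eq_zero.1 hi with h3 | h3
        · exact absurd h3 hc
        · exact_mod_cast h3
    · intro h i _
      rcases h i with ⟨h1, h2⟩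
      by_cases hlt : 2*(i:ℕ) < d - 1
      · rw [h1 hlt, if_pos (show (i:ℕ) < m by omega)]
      · by_cases hgt : d - 1 < 2*(i:ℕ)
        · rw [h2 hgt, if_neg (show ¬ (i:ℕ) < m by omega), Nat.cast_zero, mul_zero]
        · have hc : ((d:ℤ) - 1 - 2*(i:ℕ)) = 0 := by omega
          simp [hc]

/-- Leading term of the ball-counting polynomial `b_r^(d)(X) = Σ_{ε ∈ E_r^(d)} b_ε(X)`,
where each `b_ε` is monic of degree `D(ε)`: for `d` even, the maximum of `D` over
`E_r^(d)` is `d²r/4`, attained exactly once, and the leading term is `X^{d²r/4}`;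
for `d` odd, the maximum is `(d²−1)r/4`, attained at exactly `r+1` elements, and the
leading term is `(r+1)X^{(d²−1)r/4}`. -/
theorem leading_term_ball_polynomial
    (d r : ℕ) (hd : 2 ≤ d) (hr : 1 ≤ r)
    (S : Finset (Fin d → ℕ))
    (hS : ∀ ε : Fin d → ℕ, ε ∈ S ↔
      ((∀ i j : Fin d, i ≤ j → ε j ≤ ε i) ∧
        ε ⟨0, by omega⟩ ≤ r ∧ ε ⟨d - 1, by omega⟩ = 0))
    (b : (Fin d → ℕ) → Polynomial ℤ)
    (hb : ∀ ε ∈ S, (b ε).Monic ∧ (b ε).natDegree = degDN d ε) :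
    (Even d →
      (∀ ε ∈ S, degDN d ε ≤ d ^ 2 * r / 4) ∧
      (∀ ε ∈ S, (degDN d ε = d ^ 2 * r / 4 ↔
        ε = fun i : Fin d => if (i : ℕ) < d / 2 then r else 0)) ∧
      (∑ ε ∈ S, b ε).natDegree = d ^ 2 * r / 4 ∧
      (∑ ε ∈ S, b ε).leadingCoeff = 1) ∧
    (Odd d →
      (∀ ε ∈ S, degDN d ε ≤ (d ^ 2 - 1) * r / 4) ∧
      (∀ ε ∈ S, (degDN d ε = (d ^ 2 - 1) * r / 4 ↔
        (∀ i : Fin d, ((i : ℕ) < (d - 1) / 2 → ε i = r) ∧ ((d - 1) / 2 < (i : ℕ) → ε i = 0)))) ∧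
      Nat.card {ε : Fin d → ℕ // ε ∈ S ∧ degDN d ε = (d ^ 2 - 1) * r / 4} = r + 1 ∧
      (∑ ε ∈ S, b ε).natDegree = (d ^ 2 - 1) * r / 4 ∧
      (∑ ε ∈ S, b ε).leadingCoeff = r + 1) := by
  set M := d/2 * ((d+1)/2) * r with hM
  set m0 := (d-1)/2 with hm0
  have hm0d : m0 < d := by omega
  -- generic facts
  have hSle : ∀ ε ∈ S, ∀ i : Fin d, ε i ≤ r := by
    intro ε hε i
    obtain ⟨hA, h0, _⟩ := (hS ε).1 hε
    exact le_trans (hA ⟨0, by omega⟩ i (Fin.mk_le_of_le_val (Nat.zero_le _))) h0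
  have hbound : ∀ ε ∈ S, degDN d ε ≤ M :=
    fun ε hε => (core d r hd ε ((hS ε).1 hε).1 (hSle ε hε)).1
  have hchar : ∀ ε ∈ S, (degDN d ε = M ↔
      ∀ i : Fin d, (2*(i:ℕ) < d-1 → ε i = r) ∧ (d-1 < 2*(i:ℕ) → ε i = 0)) :=
    fun ε hε => (core d r hd ε ((hS ε).1 hε).1 (hSle ε hε)).2
  have hstepS : ∀ v ≤ r, stepf d r m0 v ∈ S := by
    intro v hv
    rw [hS]
    refine ⟨?_, ?_, ?_⟩
    · intro i j hij
      have hij' : (i:ℕ) ≤ (j:ℕ) := hij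
      simp only [stepf]
      split_ifs <;> omega
    · simp only [stepf]
      split_ifs <;> omega
    · simp only [stepf]
      split_ifs <;> omega
  have hstepchar : ∀ v ≤ r, (d % 2 = 1 ∨ v = r) →
      ∀ i : Fin d, (2*(i:ℕ) < d-1 → stepf d r m0 v i = r) ∧
        (d-1 < 2*(i:ℕ) → stepf d r m0 v i = 0) := by
    intro v hv hpar i
    constructor <;> intro h <;> simp only [stepf] <;> split_ifs <;> omega
  have hstepdeg : ∀ v ≤ r, (d % 2 = 1 ∨ v = r) → degDN d (stepf d r m0 v) = M :=
    fun v hv hpar => (hchar _ (hstepS v hv)).2 (hstepchar v hv hpar)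
  -- polynomial facts
  have hdegle : ∀ ε ∈ S, (b ε).natDegree ≤ M := fun ε hε => (hb ε hε).2 ▸ hbound ε hε
  have hcoeff : (∑ ε ∈ S, b ε).coeff M
      = ((S.filter (fun ε => degDN d ε = M)).card : ℤ) := by
    rw [Polynomial.finset_sum_coeff, ← Finset.sum_boole]
    refine Finset.sum_congr rfl fun ε hε => ?_
    by_cases hde : degDN d ε = M
    · rw [if_pos hde]
      have hnd : (b ε).natDegree = M := (hb ε hε).2.trans hde
      rw [← hnd]
      exact (hb ε hε).1.coeff_natDegree
    · rw [if_neg hde]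
      exact Polynomial.coeff_eq_zero_of_natDegree_lt
        (lt_of_le_of_ne (hdegle ε hε) (fun h => hde ((hb ε hε).2.symm.trans h)))
  have hmain : ∀ k : ℕ, (S.filter (fun ε => degDN d ε = M)).card = k → 1 ≤ k →
      (∑ ε ∈ S, b ε).natDegree = M ∧ (∑ ε ∈ S, b ε).leadingCoeff = (k : ℤ) := by
    intro k hk hk1
    have hcoeff' : (∑ ε ∈ S, b ε).coeff M = (k : ℤ) := by rw [hcoeff, hk]
    have hne : (∑ ε ∈ S, b ε).coeff M ≠ 0 := by
      rw [hcoeff']; exact_mod_cast (by omega : k ≠ 0)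
    have h1 : (∑ ε ∈ S, b ε).natDegree ≤ M :=
      Polynomial.natDegree_sum_le_of_forall_le S b hdegle
    have h2 : M ≤ (∑ ε ∈ S, b ε).natDegree := Polynomial.le_natDegree_of_ne_zero hne
    have hdeq : (∑ ε ∈ S, b ε).natDegree = M := le_antisymm h1 h2
    exact ⟨hdeq, by rw [Polynomial.leadingCoeff, hdeq, hcoeff']⟩
  constructor
  · -- even case
    intro he
    have hd2 : d % 2 = 0 := Nat.even_iff.1 he
    have hMe : d ^ 2 * r / 4 = M := by
      obtain ⟨k, hk⟩ := he
      subst hk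
      have h4 : (k+k) ^ 2 * r = 4 * (k*k*r) := by ring
      rw [h4, Nat.mul_div_cancel_left _ (by norm_num), hM]
      have e1 : (k+k)/2 = k := by omega
      have e2 : (k+k+1)/2 = k := by omega
      rw [e1, e2]
    rw [hMe]
    have hfilter : S.filter (fun ε => degDN d ε = M) = {stepf d r m0 r} := by
      ext ε
      simp only [Finset.mem_filter, Finset.mem_singleton]
      constructor
      · rintro ⟨hε, hdeg⟩
        have h := (hchar ε hε).1 hdeg
        funext i
        rcases h i with ⟨h1, h2⟩
        simp only [stepf]
        split_ifs with hh1 hh2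
        · exact h1 (by omega)
        · exact h1 (by omega)
        · exact h2 (by omega)
      · rintro rfl
        exact ⟨hstepS r le_rfl, hstepdeg r le_rfl (Or.inr rfl)⟩
    have hcard : (S.filter (fun ε => degDN d ε = M)).card = 1 := by
      rw [hfilter, Finset.card_singleton]
    obtain ⟨hdeq, hlc⟩ := hmain 1 hcard le_rfl
    refine ⟨hbound, ?_, hdeq, by simpa using hlc⟩
    intro ε hε
    rw [hchar ε hε]
    constructor
    · intro h
      funext i
      rcases h i with ⟨h1, h2⟩
      by_cases hi : (i:ℕ) < d/2
      · simp only [if_pos hi]; exact h1 (by omega)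
      · simp only [if_neg hi]; exact h2 (by omega)
    · rintro rfl
      intro i
      constructor <;> intro h <;> simp only [] <;> split_ifs <;> omega
  · -- odd case
    intro ho
    have hd2 : d % 2 = 1 := Nat.odd_iff.1 ho
    have hMo : (d ^ 2 - 1) * r / 4 = M := by
      obtain ⟨k, hk⟩ := ho
      subst hk
      have hsq : (2*k+1) ^ 2 = 4 * (k*(k+1)) + 1 := by ring
      have h4 : ((2*k+1) ^ 2 - 1) * r = 4 * (k*(k+1)*r) := by
        rw [hsq, Nat.add_sub_cancel]; ring
      rw [h4, Nat.mul_div_cancel_left _ (by norm_num), hM]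
      have e1 : (2*k+1)/2 = k := by omega
      have e2 : (2*k+1+1)/2 = k+1 := by omega
      rw [e1, e2]
    rw [hMo]
    have hfilter : S.filter (fun ε => degDN d ε = M)
        = (Finset.range (r+1)).image (fun v => stepf d r m0 v) := by
      ext ε
      simp only [Finset.mem_filter, Finset.mem_image, Finset.mem_range]
      constructor
      · rintro ⟨hε, hdeg⟩
        refine ⟨ε ⟨m0, hm0d⟩, by have := hSle ε hε ⟨m0, hm0d⟩; omega, ?_⟩
        have h := (hchar ε hε).1 hdeg
        funext i
        simp only [stepf]
        split_ifs with hh1 hh2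
        · exact ((h i).1 (by omega)).symm
        · have : i = ⟨m0, hm0d⟩ := Fin.ext hh2
          rw [this]
        · exact ((h i).2 (by omega)).symm
      · rintro ⟨v, hv, rfl⟩
        exact ⟨hstepS v (by omega), hstepdeg v (by omega) (Or.inl hd2)⟩
    have hinj : Function.Injective (fun v => stepf d r m0 v) := by
      intro v w h
      have := congrFun h ⟨m0, hm0d⟩
      simpa [stepf] using this
    have hcard : (S.filter (fun ε => degDN d ε = M)).card = r + 1 := by
      rw [hfilter, Finset.card_image_of_injective _ hinj, Finset.card_range]
    obtain ⟨hdeq, hlc⟩ := hmain (r+1) hcard (by omega)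
    have hNat : Nat.card {ε : Fin d → ℕ // ε ∈ S ∧ degDN d ε = M} = r + 1 := by
      rw [← hcard, ← Nat.card_eq_finsetCard]
      exact Nat.card_congr (Equiv.subtypeEquivRight fun ε => by simp [Finset.mem_filter])
    refine ⟨hbound, ?_, hNat, hdeq, by exact_mod_cast hlc⟩
    intro ε hε
    rw [hchar ε hε]
    constructor
    · intro h i
      exact ⟨fun hi => (h i).1 (by omega), fun hi => (h i).2 (by omega)⟩
    · intro h i
      exact ⟨fun hi => (h i).1 (by omega), fun hi => (h i).2 (by omega)⟩

end SphericalSubmoduleCodes
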